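/- arXiv:0801.2929 — 5 statements merged into one kernel-verified Lean document; each statement's English description precedes it below -/
import Mathlib

section
/- Let X be a connected compact metric space, η > 0, and let μ, ν be two Borel probability measures on X such that ν(O) ≥ σ·η/8 for every open ball O of radius η/8, and |μ(U) − ν(U)| < δ for every finite union U of balls of radius η/8 or η/4 from a fixed finite η/8-cover, where δ = σ·η/16. Then for every compact subset F ⊆ X one has μ(F) ≤ ν(B_η(F)), where B_η(F) = {x ∈ X : dist(x, F) < η}. -/
/-!
Cover `F` by the balls `U` of the `η/8`-cover that meet it, so `F ⊆ U ⊆ B_{η/4}(F)`. Unless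
`B_η(F)` is everything, connectedness gives a point `y` at distance exactly `3η/8` from `F`;
its ball of radius `η/8` lies in `B_η(F)` and misses `U`. Hence
`μ(F) ≤ μ(U) < ν(U) + ση/16 < ν(U) + ν(ball y (η/8)) ≤ ν(B_η(F))`.
-/

open MeasureTheory Metric Set

section Geometry

variable {X : Type*} [PseudoMetricSpace X]

theorem exists_infDist_eq_of_thickening_ne_univ [PreconnectedSpace X] {F : Set X}
    (hF : F.Nonempty) {r δ : ℝ} (hr : 0 ≤ r) (hrδ : r ≤ δ) (hT : thickening δ F ≠ univ) :
    ∃ y, infDist y F = r := by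
  obtain ⟨p, hp⟩ := hF
  obtain ⟨z, hz⟩ := (ne_univ_iff_exists_notMem _).mp hT
  have hδz : δ ≤ infDist z F :=
    not_lt.mp fun h => hz ((mem_thickening_iff_infDist_lt ⟨p, hp⟩).mpr h)
  refine intermediate_value_univ p z (continuous_infDist_pt F) ⟨?_, hrδ.trans hδz⟩
  simpa [infDist_zero_of_mem hp] using hr

theorem disjoint_thickening_ball {F : Set X} {y : X} {r s : ℝ} (h : r + s ≤ infDist y F) :
    Disjoint (thickening r F) (ball y s) := by
  refine disjoint_left.mpr fun w hwF hwy => ?_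
  obtain ⟨z, hz, hwz⟩ := mem_thickening_iff.mp hwF
  have : infDist y F < s + r :=
    calc infDist y F ≤ dist y z := infDist_le_dist_of_mem hz
      _ ≤ dist y w + dist w z := dist_triangle y w z
      _ < s + r := add_lt_add (mem_ball'.mp hwy) hwz
  linarith

theorem ball_subset_thickening_of_infDist_add_le {F : Set X} (hF : F.Nonempty) {y : X}
    {s δ : ℝ} (h : infDist y F + s ≤ δ) : ball y s ⊆ thickening δ F := fun w hw =>
  (mem_thickening_iff_infDist_lt hF).mpr <|
    calc infDist w F ≤ infDist y F + dist w y := infDist_le_infDist_add_dist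
      _ < δ := by linarith [mem_ball.mp hw]

open Classical in
noncomputable def coverIndicesMeeting {ι : Type*} [Fintype ι] (c : ι → X) (ε : ℝ) (F : Set X) :
    Finset ι :=
  Finset.univ.filter fun i => (ball (c i) ε ∩ F).Nonempty

variable {ι : Type*} [Fintype ι] (c : ι → X) {ε : ℝ} (F : Set X)

theorem subset_biUnion_coverIndicesMeeting (hcover : ⋃ i, ball (c i) ε = univ) :
    F ⊆ ⋃ i ∈ coverIndicesMeeting c ε F, ball (c i) ε := by
  intro x hx
  obtain ⟨i, hi⟩ := mem_iUnion.mp (hcover ▸ mem_univ x : x ∈ ⋃ i, ball (c i) ε)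
  exact mem_biUnion (by simpa [coverIndicesMeeting] using ⟨x, hi, hx⟩) hi

theorem biUnion_coverIndicesMeeting_subset_thickening :
    ⋃ i ∈ coverIndicesMeeting c ε F, ball (c i) ε ⊆ thickening (2 * ε) F := by
  simp only [iUnion_subset_iff, coverIndicesMeeting, Finset.mem_filter, Finset.mem_univ,
    true_and]
  rintro i ⟨q, hqi, hqF⟩ w hwi
  refine mem_thickening_iff.mpr ⟨q, hqF, ?_⟩
  calc dist w q ≤ dist w (c i) + dist q (c i) := dist_triangle_right w q (c i)
    _ < 2 * ε := by linarith [mem_ball.mp hwi, mem_ball.mp hqi]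

end Geometry

theorem measure_le_of_abs_measureReal_sub_lt {X : Type*} [MeasurableSpace X]
    {μ ν : Measure X} [IsFiniteMeasure μ] [IsFiniteMeasure ν] {F U B T : Set X} {δ : ℝ}
    (hFU : F ⊆ U) (hUB : Disjoint U B) (hB : MeasurableSet B) (hUBT : U ∪ B ⊆ T)
    (happrox : |μ.real U - ν.real U| < δ) (hδB : δ ≤ ν.real B) : μ F ≤ ν T := by
  have hreal : μ.real F ≤ ν.real T :=
    calc μ.real F ≤ μ.real U := measureReal_mono hFU
      _ ≤ ν.real U + ν.real B := by linarith [(abs_lt.mp happrox).2]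
      _ = ν.real (U ∪ B) := (measureReal_union hUB hB).symm
      _ ≤ ν.real T := measureReal_mono hUBT
  exact (ENNReal.toReal_le_toReal (measure_ne_top _ _) (measure_ne_top _ _)).mp hreal

theorem stmt_5_general {X : Type*} [MetricSpace X] [ConnectedSpace X]
    [MeasurableSpace X] [BorelSpace X]
    (η σ : ℝ) (hη : 0 < η) (hσ : 0 < σ)
    (μ ν : Measure X) [IsProbabilityMeasure μ] [IsProbabilityMeasure ν]
    (N : ℕ) (c : Fin N → X)
    (hcover : (⋃ i, ball (c i) (η / 8)) = Set.univ)
    (hν : ∀ x : X, ENNReal.ofReal (σ * η / 8) ≤ ν (ball x (η / 8)))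
    (happrox8 : ∀ S : Finset (Fin N),
      |(μ (⋃ i ∈ S, ball (c i) (η / 8))).toReal - (ν (⋃ i ∈ S, ball (c i) (η / 8))).toReal|
        < σ * η / 16) :
    ∀ F : Set X, IsCompact F → μ F ≤ ν (thickening η F) := by
  intro F _
  rcases F.eq_empty_or_nonempty with rfl | hF
  · simp
  by_cases hT : thickening η F = univ
  · simp [hT, prob_le_one]
  obtain ⟨y, hy⟩ := exists_infDist_eq_of_thickening_ne_univ hF (by positivity)
    (by linarith : 3 * η / 8 ≤ η) hT
  set U := ⋃ i ∈ coverIndicesMeeting c (η / 8) F, ball (c i) (η / 8)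
  have hUF : U ⊆ thickening (2 * (η / 8)) F := biUnion_coverIndicesMeeting_subset_thickening c F
  have hUT : U ∪ ball y (η / 8) ⊆ thickening η F :=
    union_subset (hUF.trans (thickening_mono (by linarith) F))
      (ball_subset_thickening_of_infDist_add_le hF (by linarith))
  have hνy : σ * η / 8 ≤ ν.real (ball y (η / 8)) :=
    (ENNReal.ofReal_le_iff_le_toReal (measure_ne_top _ _)).mp (hν y)
  exact measure_le_of_abs_measureReal_sub_lt (subset_biUnion_coverIndicesMeeting c F hcover)
    ((disjoint_thickening_ball (by linarith)).mono_left hUF) measurableSet_ball hUT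
    (happrox8 _) (by nlinarith)

/-- If `ν` gives mass at least `σ·η/8` to every ball of radius `η/8`, and `μ`, `ν`
nearly agree (within `δ = σ·η/16`) on finite unions of balls of radius `η/8` or
`η/4` from a fixed finite `η/8`-cover of the connected compact metric space `X`,
then `μ(F) ≤ ν(B_η(F))` for every compact `F`. -/
theorem stmt_5 {X : Type*} [MetricSpace X] [CompactSpace X] [ConnectedSpace X]
    [MeasurableSpace X] [BorelSpace X]
    (η σ : ℝ) (hη : 0 < η) (hσ : 0 < σ)
    (μ ν : Measure X) [IsProbabilityMeasure μ] [IsProbabilityMeasure ν]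
    (N : ℕ) (c : Fin N → X)
    (hcover : (⋃ i, ball (c i) (η / 8)) = Set.univ)
    (hν : ∀ x : X, ENNReal.ofReal (σ * η / 8) ≤ ν (ball x (η / 8)))
    (happrox8 : ∀ S : Finset (Fin N),
      |(μ (⋃ i ∈ S, ball (c i) (η / 8))).toReal - (ν (⋃ i ∈ S, ball (c i) (η / 8))).toReal|
        < σ * η / 16)
    (happrox4 : ∀ S : Finset (Fin N),
      |(μ (⋃ i ∈ S, ball (c i) (η / 4))).toReal - (ν (⋃ i ∈ S, ball (c i) (η / 4))).toReal|
        < σ * η / 16) :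
    ∀ F : Set X, IsCompact F → μ F ≤ ν (thickening η F) :=
  stmt_5_general η σ hη hσ μ ν N c hcover hν happrox8
end

section
/- Let X be a compact metric space, A a unital simple C*-algebra with nonempty tracial state space T(A), and φ : C(X) → A a unital monomorphism. Then there exists a non-decreasing function Δ : (0,1) → (0,1) such that μ_{τ∘φ}(O_a) ≥ Δ(a) for every tracial state τ ∈ T(A) and every open ball O_a of X with radius a ∈ (0,1). -/
open MeasureTheory

/-- A tracial state on a unital C*-algebra. -/
def IsTracialState {A : Type*} [Ring A] [StarRing A] [Algebra ℂ A] [TopologicalSpace A]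
    (τ : A →ₗ[ℂ] ℂ) : Prop :=
  Continuous τ ∧ τ 1 = 1 ∧ (∀ a : A, 0 ≤ (τ (star a * a)).re ∧ (τ (star a * a)).im = 0) ∧
    ∀ a b : A, τ (a * b) = τ (b * a)

/-!
A bump function supported in the ball `B(x, r)` is a nonzero positive `f ∈ C(X)`, so `b = φ f` is a
nonzero positive element of `A`. By simplicity, `1` lies in the closure of the ideal generated by
`b`, so some `s = ∑ uᵢ b vᵢ` is within `1/2` of `1`. Every trace then satisfies
`1/2 ≤ Re τ s ≤ K τ(b)` with `K = ∑ ‖vᵢ uᵢ‖` independent of `τ` (as `τ(u b v) = τ(√b (v u) √b)`),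
and `μ_{τ∘φ}(B(x, r)) ≥ ∫ f dμ = τ(b)`. Covering the compact `X` by finitely many balls of radius
`r/2` makes the bound uniform in the centre, and `Δ(a)` is the infimum of `μ(B(z, a))` over all
such `μ` and `z`, capped at `1/2`.
-/

open Metric
open scoped ComplexOrder ComplexStarModule ENNReal

namespace TwoSidedIdeal

variable {R : Type*} [Ring R] [TopologicalSpace R] [IsTopologicalRing R]

def topologicalClosure (I : TwoSidedIdeal R) : TwoSidedIdeal R :=
  .mk' (closure I) (subset_closure I.zero_mem)
    (fun hx hy => map_mem_closure₂ continuous_add hx hy fun _ ha _ hb => I.add_mem ha hb)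
    (fun hx => map_mem_closure continuous_neg hx fun _ ha => I.neg_mem ha)
    (fun {x _} hy => map_mem_closure (continuous_const_mul x) hy
      fun _ ha => I.mul_mem_left _ _ ha)
    (fun {_ y} hx => map_mem_closure (f := (· * y)) (continuous_mul_const y) hx
      fun _ ha => I.mul_mem_right _ _ ha)

theorem coe_topologicalClosure (I : TwoSidedIdeal R) :
    (I.topologicalClosure : Set R) = closure I :=
  coe_mk' (R := R) ..

theorem one_mem_closure_span_singleton
    (hsimple : ∀ I : TwoSidedIdeal R, IsClosed (I : Set R) → I = ⊥ ∨ I = ⊤) {b : R} (hb : b ≠ 0) :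
    (1 : R) ∈ closure (span {b} : Set R) := by
  rw [← coe_topologicalClosure, SetLike.mem_coe]
  rcases hsimple (span {b}).topologicalClosure
    (by rw [coe_topologicalClosure]; exact isClosed_closure) with h | h
  · refine absurd ?_ hb
    rw [← mem_bot, ← h, ← SetLike.mem_coe, coe_topologicalClosure]
    exact subset_closure (subset_span rfl)
  · exact h ▸ mem_top _

end TwoSidedIdeal

theorem CFC.sqrt_mul_mul_sqrt_le {A : Type*} [CStarAlgebra A] [PartialOrder A]
    [StarOrderedRing A] {b e : A} (hb : 0 ≤ b) (he : IsSelfAdjoint e) :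
    CFC.sqrt b * e * CFC.sqrt b ≤ ‖e‖ • b := by
  have h := star_left_conjugate_le_conjugate he.le_algebraMap_norm_self (CFC.sqrt b)
  rwa [(CFC.sqrt_nonneg b).isSelfAdjoint.star_eq, Algebra.algebraMap_eq_smul_one, mul_smul_comm,
    mul_one, smul_mul_assoc, CFC.sqrt_mul_sqrt_self b hb] at h

namespace IsTracialState

section StarOrderedRing

variable {A : Type*} [Ring A] [StarRing A] [Algebra ℂ A] [TopologicalSpace A] [PartialOrder A]
  [StarOrderedRing A] {τ : A →ₗ[ℂ] ℂ}

theorem map_nonneg (hτ : IsTracialState τ) {a : A} (ha : 0 ≤ a) : 0 ≤ τ a := by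
  rw [StarOrderedRing.nonneg_iff] at ha
  induction ha using AddSubmonoid.closure_induction with
  | mem x hx =>
    obtain ⟨s, rfl⟩ := hx
    exact Complex.nonneg_iff.2 ⟨(hτ.2.2.1 s).1, (hτ.2.2.1 s).2.symm⟩
  | zero => simp
  | add x y _ _ hx hy => rw [map_add]; exact add_nonneg hx hy

theorem monotone (hτ : IsTracialState τ) : Monotone τ := fun a b hab => by
  simpa [sub_nonneg] using hτ.map_nonneg (sub_nonneg.2 hab)

end StarOrderedRing

section CStarAlgebra

variable {A : Type*} [CStarAlgebra A] [PartialOrder A] [StarOrderedRing A] {τ : A →ₗ[ℂ] ℂ}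

theorem im_map_eq_zero (hτ : IsTracialState τ) {a : A} (ha : IsSelfAdjoint a) : (τ a).im = 0 := by
  have h := (Complex.le_def.1 (hτ.monotone ha.le_algebraMap_norm_self)).2
  rwa [Algebra.algebraMap_eq_smul_one, τ.map_smul_of_tower, hτ.2.1, Complex.real_smul,
    mul_one, Complex.ofReal_im] at h

theorem abs_re_map_sqrt_mul_mul_sqrt_le (hτ : IsTracialState τ) {b e : A} (hb : 0 ≤ b)
    (he : IsSelfAdjoint e) : |(τ (CFC.sqrt b * e * CFC.sqrt b)).re| ≤ ‖e‖ * (τ b).re := by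
  have hsmul : (τ (‖e‖ • b)).re = ‖e‖ * (τ b).re := by
    rw [τ.map_smul_of_tower, Complex.smul_re, smul_eq_mul]
  have hup := (Complex.le_def.1 (hτ.monotone (CFC.sqrt_mul_mul_sqrt_le hb he))).1
  have hlo := (Complex.le_def.1 (hτ.monotone (CFC.sqrt_mul_mul_sqrt_le hb he.neg))).1
  rw [hsmul] at hup
  rw [norm_neg, hsmul, mul_neg, neg_mul, map_neg, Complex.neg_re] at hlo
  exact abs_le.2 ⟨by linarith, hup⟩

theorem abs_re_map_mul_le (hτ : IsTracialState τ) {b : A} (hb : 0 ≤ b) (c : A) :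
    |(τ (b * c)).re| ≤ ‖c‖ * (τ b).re := by
  set r := CFC.sqrt b
  have hsplit : r * c * r = r * ℜ c * r + Complex.I • (r * ℑ c * r) := by
    conv_lhs => rw [← realPart_add_I_smul_imaginaryPart c]
    rw [mul_add, add_mul, mul_smul_comm, smul_mul_assoc]
  have htrace : τ (b * c) = τ (r * ℜ c * r) + Complex.I * τ (r * ℑ c * r) := by
    rw [← CFC.sqrt_mul_sqrt_self b hb, mul_assoc, hτ.2.2.2, mul_assoc, ← mul_assoc, hsplit,
      map_add, map_smul, smul_eq_mul]
  have him : (τ (r * ℑ c * r)).im = 0 :=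
    hτ.im_map_eq_zero ((ℑ c).2.conjugate_self (CFC.sqrt_nonneg b).isSelfAdjoint)
  rw [htrace, Complex.add_re, Complex.I_mul_re, him, neg_zero, add_zero]
  exact (hτ.abs_re_map_sqrt_mul_mul_sqrt_le hb (ℜ c).2).trans
    (mul_le_mul_of_nonneg_right (realPart.norm_le c) (Complex.nonneg_iff.1 (hτ.map_nonneg hb)).1)

theorem abs_re_le_norm (hτ : IsTracialState τ) (a : A) : |(τ a).re| ≤ ‖a‖ := by
  simpa [hτ.2.1] using hτ.abs_re_map_mul_le zero_le_one a

end CStarAlgebra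

end IsTracialState

section Simple

open scoped Pointwise

variable {A : Type*} [CStarAlgebra A] [PartialOrder A] [StarOrderedRing A]

theorem exists_abs_re_trace_le_of_mem_span {b s : A} (hb : 0 ≤ b)
    (hs : s ∈ TwoSidedIdeal.span {b}) :
    ∃ K : ℝ, ∀ τ : A →ₗ[ℂ] ℂ, IsTracialState τ → |(τ s).re| ≤ K * (τ b).re := by
  rw [TwoSidedIdeal.mem_span_iff_mem_addSubgroup_closure] at hs
  induction hs using AddSubgroup.closure_induction with
  | mem x hx =>
    obtain ⟨_, ⟨u, -, _, rfl, rfl⟩, v, -, rfl⟩ := hx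
    refine ⟨‖v * u‖, fun τ hτ => ?_⟩
    dsimp only
    rw [mul_assoc, hτ.2.2.2, mul_assoc]
    exact hτ.abs_re_map_mul_le hb _
  | zero => exact ⟨0, by simp⟩
  | add x y _ _ hx hy =>
    obtain ⟨K, hK⟩ := hx
    obtain ⟨L, hL⟩ := hy
    refine ⟨K + L, fun τ hτ => ?_⟩
    rw [map_add, Complex.add_re, add_mul]
    exact (abs_add_le _ _).trans (add_le_add (hK τ hτ) (hL τ hτ))
  | neg x _ hx =>
    obtain ⟨K, hK⟩ := hx
    exact ⟨K, fun τ hτ => by simpa using hK τ hτ⟩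

theorem exists_pos_le_re_trace
    (hsimple : ∀ I : TwoSidedIdeal A, IsClosed (I : Set A) → I = ⊥ ∨ I = ⊤)
    {b : A} (hb : 0 ≤ b) (hb0 : b ≠ 0) :
    ∃ c > 0, ∀ τ : A →ₗ[ℂ] ℂ, IsTracialState τ → c ≤ (τ b).re := by
  obtain ⟨s, hs, hs1⟩ := Metric.mem_closure_iff.1
    (TwoSidedIdeal.one_mem_closure_span_singleton hsimple hb0) (1 / 2) one_half_pos
  obtain ⟨K, hK⟩ := exists_abs_re_trace_le_of_mem_span hb hs
  refine ⟨1 / (2 * max K 1), by positivity, fun τ hτ => ?_⟩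
  have hτs : 1 / 2 ≤ (τ s).re := by
    have h := (abs_le.1 (hτ.abs_re_le_norm (s - 1))).1
    rw [map_sub, hτ.2.1, Complex.sub_re, Complex.one_re] at h
    rw [dist_eq_norm, norm_sub_rev] at hs1
    linarith
  have hτb : 0 ≤ (τ b).re := (Complex.nonneg_iff.1 (hτ.map_nonneg hb)).1
  rw [div_le_iff₀ (by positivity)]
  nlinarith [le_abs_self (τ s).re, hK τ hτ, le_max_left K 1]

end Simple

theorem iInf_ball_pos_of_monotone {X : Type*} [PseudoMetricSpace X] [CompactSpace X]
    {m : Set X → ℝ≥0∞} (hm : Monotone m) (h : ∀ x (r : ℝ), 0 < r → 0 < m (ball x r))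
    {r : ℝ} (hr : 0 < r) : 0 < ⨅ z, m (ball z r) := by
  obtain ⟨t, ht⟩ := isCompact_univ.elim_finite_subcover (fun x : X => ball x (r / 2))
    (fun _ => isOpen_ball) (fun x _ => Set.mem_iUnion.2 ⟨x, mem_ball_self (half_pos hr)⟩)
  have ht_pos : 0 < t.inf fun x => m (ball x (r / 2)) :=
    (Finset.lt_inf_iff ENNReal.zero_lt_top).2 fun x _ => h x _ (half_pos hr)
  refine ht_pos.trans_le (le_iInf fun z => ?_)
  obtain ⟨x, hxt, hzx⟩ := Set.mem_iUnion₂.1 (ht (Set.mem_univ z))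
  refine (Finset.inf_le hxt).trans (hm (ball_subset_ball' ?_))
  rw [mem_ball'] at hzx
  linarith

theorem exists_monotone_ofReal_le {α : Type*} [Preorder α] {m : α → ℝ≥0∞} (hm : Monotone m) :
    ∃ Δ : α → ℝ, Monotone Δ ∧ (∀ a, 0 < m a → 0 < Δ a) ∧ (∀ a, Δ a < 1) ∧
      ∀ a, ENNReal.ofReal (Δ a) ≤ m a := by
  -- the cap keeps `Δ` meaningful where `m a = ∞`, whose `toReal` is `0`
  have hfin : ∀ a, min (1 / 2) (m a) ≠ ∞ := fun a =>
    ne_top_of_le_ne_top (by simp) (min_le_left _ _)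
  refine ⟨fun a => (min (1 / 2) (m a)).toReal, fun a b hab => ?_, fun a ha => ?_, fun a => ?_,
    fun a => ?_⟩
  · exact ENNReal.toReal_mono (hfin b) (min_le_min_left _ (hm hab))
  · exact ENNReal.toReal_pos (lt_min (by simp) ha).ne' (hfin a)
  · exact (ENNReal.toReal_mono (by simp) (min_le_left _ _)).trans_lt (by norm_num)
  · rw [ENNReal.ofReal_toReal (hfin a)]
    exact min_le_right _ _

def tracialMeasures {X : Type*} [TopologicalSpace X] [MeasurableSpace X] {A : Type*} [Ring A]
    [StarRing A] [Algebra ℂ A] [TopologicalSpace A] (φ : C(X, ℂ) →⋆ₐ[ℂ] A) : Set (Measure X) :=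
  {μ | ∃ τ : A →ₗ[ℂ] ℂ, IsTracialState τ ∧ ∀ f : C(X, ℂ), τ (φ f) = ∫ z, f z ∂μ}

theorem iInf_tracialMeasures_ball_pos {X : Type*} [PseudoMetricSpace X] [MeasurableSpace X]
    {A : Type*} [CStarAlgebra A] [PartialOrder A] [StarOrderedRing A]
    (hsimple : ∀ I : TwoSidedIdeal A, IsClosed (I : Set A) → I = ⊥ ∨ I = ⊤)
    {φ : C(X, ℂ) →⋆ₐ[ℂ] A} (hinj : Function.Injective φ) (x : X) {r : ℝ} (hr : 0 < r) :
    0 < ⨅ μ ∈ tracialMeasures φ, μ (ball x r) := by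
  set g : X → ℝ := fun y => max 0 (1 - dist y x / r)
  let f : C(X, ℂ) := ⟨fun y => (g y : ℂ), by fun_prop⟩
  have hf : 0 ≤ f := fun y => Complex.zero_le_real.2 (le_max_left _ _)
  have hfx : f ≠ 0 := fun h => by simpa [f, g] using DFunLike.congr_fun h x
  obtain ⟨c, hc, hcτ⟩ := exists_pos_le_re_trace hsimple (map_nonneg φ hf)
    ((map_ne_zero_iff φ hinj).2 hfx)
  refine (ENNReal.ofReal_pos.2 hc).trans_le (le_iInf₂ fun μ ⟨τ, hτ, hrep⟩ => ?_)
  have hint : c ≤ ∫ y, g y ∂μ := by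
    have h := hcτ τ hτ
    rwa [hrep, show (fun y => f y) = fun y => (g y : ℂ) from rfl, integral_complex_ofReal,
      Complex.ofReal_re] at h
  refine (ENNReal.ofReal_le_ofReal hint).trans (integral_le_measure (fun y _ => ?_) fun y hy => ?_)
  · exact max_le zero_le_one (sub_le_self _ (div_nonneg dist_nonneg hr.le))
  · rw [Set.mem_compl_iff, mem_ball, not_lt, ← div_le_div_iff_of_pos_right hr,
      div_self hr.ne'] at hy
    exact max_le le_rfl (by linarith)

theorem stmt_8_general {X : Type*} [MetricSpace X] [CompactSpace X] [MeasurableSpace X]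
    {A : Type*} [CStarAlgebra A]
    (hsimple : ∀ I : TwoSidedIdeal A, IsClosed (I : Set A) → I = ⊥ ∨ I = ⊤)
    (φ : C(X, ℂ) →⋆ₐ[ℂ] A) (hinj : Function.Injective φ) :
    ∃ Δ : ℝ → ℝ,
      (∀ a b : ℝ, 0 < a → a ≤ b → b < 1 → Δ a ≤ Δ b) ∧
      (∀ a : ℝ, 0 < a → a < 1 → 0 < Δ a ∧ Δ a < 1) ∧
      ∀ τ : A →ₗ[ℂ] ℂ, IsTracialState τ →
        ∀ μ : Measure X, IsProbabilityMeasure μ →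
          (∀ f : C(X, ℂ), τ (φ f) = ∫ z, f z ∂μ) →
          ∀ a : ℝ, 0 < a → a < 1 → ∀ z : X,
            ENNReal.ofReal (Δ a) ≤ μ (Metric.ball z a) := by
  let _ : PartialOrder A := CStarAlgebra.spectralOrder A
  let _ : StarOrderedRing A := CStarAlgebra.spectralOrderedRing A
  set m : Set X → ℝ≥0∞ := fun s => ⨅ μ ∈ tracialMeasures φ, μ s
  have hm : Monotone m := fun s t hst => iInf₂_mono fun μ _ => measure_mono hst
  obtain ⟨Δ, hΔ_mono, hΔ_pos, hΔ_lt, hΔ_le⟩ :=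
    exists_monotone_ofReal_le (m := fun a => ⨅ z, m (ball z a))
      fun a b hab => iInf_mono fun z => hm (ball_subset_ball hab)
  refine ⟨Δ, fun a b _ hab _ => hΔ_mono hab, fun a ha _ => ⟨hΔ_pos a ?_, hΔ_lt a⟩,
    fun τ hτ μ _ hrep a _ _ z => (hΔ_le a).trans (iInf_le_of_le z (iInf₂_le μ ⟨τ, hτ, hrep⟩))⟩
  exact iInf_ball_pos_of_monotone hm
    (fun x _ hr => iInf_tracialMeasures_ball_pos hsimple hinj x hr) ha

/-- For a unital monomorphism `φ : C(X) → A` into a unital simple C*-algebra with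
nonempty tracial state space, there is a non-decreasing `Δ : (0,1) → (0,1)` with
`μ_{τ∘φ}(O_a) ≥ Δ(a)` for every tracial state `τ` and every open ball of radius
`a ∈ (0,1)`. -/
theorem stmt_8 {X : Type*} [MetricSpace X] [CompactSpace X] [MeasurableSpace X] [BorelSpace X]
    {A : Type*} [CStarAlgebra A]
    (hsimple : ∀ I : TwoSidedIdeal A, IsClosed (I : Set A) → I = ⊥ ∨ I = ⊤)
    (hT : ∃ τ : A →ₗ[ℂ] ℂ, IsTracialState τ)
    (φ : C(X, ℂ) →⋆ₐ[ℂ] A) (hinj : Function.Injective φ) :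
    ∃ Δ : ℝ → ℝ,
      (∀ a b : ℝ, 0 < a → a ≤ b → b < 1 → Δ a ≤ Δ b) ∧
      (∀ a : ℝ, 0 < a → a < 1 → 0 < Δ a ∧ Δ a < 1) ∧
      ∀ τ : A →ₗ[ℂ] ℂ, IsTracialState τ →
        ∀ μ : Measure X, IsProbabilityMeasure μ →
          (∀ f : C(X, ℂ), τ (φ f) = ∫ z, f z ∂μ) →
          ∀ a : ℝ, 0 < a → a < 1 → ∀ z : X,
            ENNReal.ofReal (Δ a) ≤ μ (Metric.ball z a) :=
  stmt_8_general hsimple φ hinj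
end

section
/- Let X be a compact metric space and T = N × K : C(X)₊∖{0} → ℕ × ℝ₊∖{0} a map. Then there exists a non-decreasing Δ : (0,1) → (0,1) depending only on T with the following property: for any η > 0 there is a finite subset H ⊆ C(X)₊∖{0} such that for any unital C*-algebra B with a tracial state and any unital positive map φ : C(X) → B which is T-H-full, one has μ_{τ∘φ}(O_a) ≥ Δ(a) for all tracial states τ of B, all a ∈ (η, 1), and all open balls O_a of radius a. -/
open MeasureTheory

/-- A continuous function `f : X → ℂ` is nonnegative (a positive element of `C(X)`). -/
def CMNonneg {X : Type*} [TopologicalSpace X] (f : C(X, ℂ)) : Prop :=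
  ∀ x : X, 0 ≤ (f x).re ∧ (f x).im = 0

/-!
If `φ f = b* b` is full, `∑ zⱼ* φ(f) zⱼ = 1` with `N f` terms and `‖zⱼ‖ ≤ K f`, then
traciality and `z z* ≤ ‖z‖²` give `1 ≤ N K² τ(φ f)`, i.e. `τ(φ f) ≥ 1 / (N K² + 1)`. If moreover
`0 ≤ f ≤ 1` is a bump supported in a ball `O_a`, then `μ(O_a) ≥ ∫ f dμ = τ(φ f)`. A finite net of
`X` at scale `(k + 1)⁻¹ / 2` provides such bumps for every `a > (k + 1)⁻¹`, and `H` collects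
the bumps of the scales `k ≤ ⌈η⁻¹⌉₊`.
-/

open Finset Metric

section Trace

variable {A : Type*} [Ring A] [StarRing A] [Algebra ℂ A] [TopologicalSpace A]
  {τ : A →ₗ[ℂ] ℂ}

lemma IsTracialState.map_one (hτ : IsTracialState τ) : τ 1 = 1 := hτ.2.1

lemma IsTracialState.re_star_mul_self_nonneg (hτ : IsTracialState τ) (a : A) :
    0 ≤ (τ (star a * a)).re :=
  (hτ.2.2.1 a).1

lemma IsTracialState.map_mul_comm (hτ : IsTracialState τ) (a b : A) : τ (a * b) = τ (b * a) :=
  hτ.2.2.2 a b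

lemma IsTracialState.re_nonneg_of_mem_closure_star_mul_self (hτ : IsTracialState τ) {p : A}
    (hp : p ∈ AddSubmonoid.closure (Set.range fun s : A => star s * s)) :
    0 ≤ (τ p).re := by
  induction hp using AddSubmonoid.closure_induction with
  | mem x hx =>
    obtain ⟨s, rfl⟩ := hx
    exact hτ.re_star_mul_self_nonneg s
  | zero => simp
  | add x y _ _ hx hy =>
    rw [map_add, Complex.add_re]
    positivity

lemma IsTracialState.re_mono [PartialOrder A] [StarOrderedRing A] (hτ : IsTracialState τ)
    {x y : A} (hxy : x ≤ y) : (τ x).re ≤ (τ y).re := by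
  obtain ⟨p, hp, rfl⟩ := (StarOrderedRing.le_iff x y).mp hxy
  rw [map_add, Complex.add_re]
  linarith [hτ.re_nonneg_of_mem_closure_star_mul_self hp]

end Trace

section CStar

variable {B : Type*} [CStarAlgebra B] {τ : B →ₗ[ℂ] ℂ}

/-- Traciality moves the conjugation to the other side, where `z z* ≤ ‖z‖²`. -/
lemma IsTracialState.re_star_mul_mul_le (hτ : IsTracialState τ) (b z : B) :
    (τ (star z * (star b * b) * z)).re ≤ ‖z‖ ^ 2 * (τ (star b * b)).re := by
  let _ := CStarAlgebra.spectralOrder B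
  have _ := CStarAlgebra.spectralOrderedRing B
  have hconj : b * (z * star z) * star b ≤ ((‖z‖ ^ 2 : ℝ) : ℂ) • (b * star b) := by
    have := star_right_conjugate_le_conjugate
      (CStarAlgebra.mul_star_le_algebraMap_norm_sq (a := z)) b
    rwa [IsScalarTower.algebraMap_apply ℝ ℂ B, Algebra.algebraMap_eq_smul_one, mul_smul_comm,
      mul_one, smul_mul_assoc] at this
  calc (τ (star z * (star b * b) * z)).re
      = (τ (b * (z * star z) * star b)).re := by
        have hl : star z * (star b * b) * z = star (b * z) * (b * z) := by
          simp only [star_mul, mul_assoc]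
        have hr : b * (z * star z) * star b = b * z * star (b * z) := by
          simp only [star_mul, mul_assoc]
        rw [hl, hr, hτ.map_mul_comm]
    _ ≤ (τ (((‖z‖ ^ 2 : ℝ) : ℂ) • (b * star b))).re := hτ.re_mono hconj
    _ = ‖z‖ ^ 2 * (τ (star b * b)).re := by
        rw [τ.map_smul, hτ.map_mul_comm, smul_eq_mul, Complex.re_ofReal_mul]

lemma IsTracialState.one_div_le_re_of_sum_eq_one (hτ : IsTracialState τ) {n : ℕ} {k : ℝ}
    (b : B) (z : Fin n → B) (hz : ∀ j, ‖z j‖ ≤ k)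
    (hsum : ∑ j, star (z j) * (star b * b) * z j = 1) :
    1 / (n * k ^ 2 + 1) ≤ (τ (star b * b)).re := by
  have ht : 0 ≤ (τ (star b * b)).re := hτ.re_star_mul_self_nonneg b
  have hterm (j : Fin n) :
      (τ (star (z j) * (star b * b) * z j)).re ≤ k ^ 2 * (τ (star b * b)).re :=
    (hτ.re_star_mul_mul_le b (z j)).trans <| mul_le_mul_of_nonneg_right
      (pow_le_pow_left₀ (norm_nonneg _) (hz j) 2) ht
  have hone : 1 ≤ n * k ^ 2 * (τ (star b * b)).re := calc
    (1 : ℝ) = ∑ j, (τ (star (z j) * (star b * b) * z j)).re := by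
      rw [← Complex.re_sum, ← map_sum, hsum, hτ.map_one, Complex.one_re]
    _ ≤ ∑ _j : Fin n, k ^ 2 * (τ (star b * b)).re := sum_le_sum fun j _ => hterm j
    _ = n * k ^ 2 * (τ (star b * b)).re := by simp [mul_assoc]
  rw [div_le_iff₀ (by positivity)]
  nlinarith

end CStar

noncomputable def ballBump {X : Type*} [MetricSpace X] (y : X) (r : ℝ) : C(X, ℂ) :=
  ⟨fun x => ((max 0 (1 - dist x y / r) : ℝ) : ℂ), by fun_prop⟩

section Bump

variable {X : Type*} [MetricSpace X] (y : X) {r : ℝ}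

lemma ballBump_re (x : X) : (ballBump y r x).re = max 0 (1 - dist x y / r) := by
  simp [ballBump]

lemma ballBump_nonneg : CMNonneg (ballBump y r) := fun x =>
  ⟨by rw [ballBump_re]; exact le_max_left _ _, by simp [ballBump]⟩

lemma ballBump_ne_zero : ballBump y r ≠ 0 := fun h => by
  simpa [ballBump_re] using congrArg (fun f : C(X, ℂ) => (f y).re) h

lemma ballBump_re_le_one (hr : 0 < r) (x : X) : (ballBump y r x).re ≤ 1 := by
  rw [ballBump_re]
  have : 0 ≤ dist x y / r := by positivity
  exact max_le zero_le_one (by linarith)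

lemma ballBump_re_eq_zero (hr : 0 < r) {x : X} (hx : r ≤ dist x y) : (ballBump y r x).re = 0 := by
  rw [ballBump_re, max_eq_left]
  linarith [(one_le_div hr).2 hx]

end Bump

lemma re_integral_le_measureReal {X : Type*} [TopologicalSpace X] [CompactSpace X]
    [MeasurableSpace X] [OpensMeasurableSpace X] (μ : Measure X) [IsFiniteMeasure μ]
    (f : C(X, ℂ)) {s : Set X} (hs : MeasurableSet s) (h1 : ∀ x, (f x).re ≤ 1)
    (h0 : ∀ x ∉ s, (f x).re = 0) :
    (∫ x, f x ∂μ).re ≤ μ.real s := by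
  have hf : Integrable f μ :=
    f.continuous.integrable_of_hasCompactSupport (HasCompactSupport.of_compactSpace _)
  rw [← integral_indicator_one hs, ← RCLike.re_to_complex, ← integral_re hf]
  have hind : Integrable (s.indicator (1 : X → ℝ)) μ :=
    (integrable_indicator_iff hs).2 (integrableOn_const (measure_ne_top μ s))
  refine integral_mono hf.re hind fun x => ?_
  by_cases hx : x ∈ s
  · simpa [Set.indicator_of_mem hx] using h1 x
  · simp [Set.indicator_of_notMem hx, h0 x hx]

lemma re_integral_ballBump_le_measureReal_ball {X : Type*} [MetricSpace X] [CompactSpace X]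
    [MeasurableSpace X] [BorelSpace X] (μ : Measure X) [IsFiniteMeasure μ] {y z : X} {r a : ℝ}
    (hr : 0 < r) (hzy : dist z y < r) (hra : 2 * r ≤ a) :
    (∫ x, ballBump y r x ∂μ).re ≤ μ.real (ball z a) := by
  refine re_integral_le_measureReal μ _ measurableSet_ball (ballBump_re_le_one y hr) fun x hx => ?_
  refine ballBump_re_eq_zero y hr ?_
  rw [mem_ball, not_lt] at hx
  linarith [dist_triangle x y z, dist_comm y z]

lemma exists_finset_forall_exists_dist_lt {X : Type*} [MetricSpace X] [CompactSpace X] {ε : ℝ}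
    (hε : 0 < ε) : ∃ s : Finset X, ∀ x, ∃ y ∈ s, dist x y < ε := by
  obtain ⟨t, -, ht, hcover⟩ := finite_cover_balls_of_compact (isCompact_univ (X := X)) hε
  refine ⟨ht.toFinset, fun x => ?_⟩
  obtain ⟨y, hy, hxy⟩ := Set.mem_iUnion₂.1 (hcover (Set.mem_univ x))
  exact ⟨y, ht.mem_toFinset.2 hy, hxy⟩

lemma inv_natCeil_inv_add_one_lt {a : ℝ} (ha : 0 < a) : ((⌈a⁻¹⌉₊ : ℝ) + 1)⁻¹ < a :=
  inv_lt_of_inv_lt₀ ha (by linarith [Nat.le_ceil a⁻¹])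

/-- The function `Δ`: `⌈a⁻¹⌉₊` is the index of a scale `(k + 1)⁻¹` below `a`, and summing the
weights `w` of all coarser scales makes `Δ` monotone. -/
noncomputable def ballMassBound (w : ℕ → ℝ) (a : ℝ) : ℝ :=
  1 / (2 + ∑ j ∈ range (⌈a⁻¹⌉₊ + 1), w j)

section BallMassBound

variable {w : ℕ → ℝ}

lemma ballMassBound_pos (hw : ∀ k, 0 ≤ w k) (a : ℝ) : 0 < ballMassBound w a := by
  have := sum_nonneg fun j (_ : j ∈ range (⌈a⁻¹⌉₊ + 1)) => hw j
  unfold ballMassBound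
  positivity

lemma ballMassBound_lt_one (hw : ∀ k, 0 ≤ w k) (a : ℝ) : ballMassBound w a < 1 := by
  have := sum_nonneg fun j (_ : j ∈ range (⌈a⁻¹⌉₊ + 1)) => hw j
  rw [ballMassBound, div_lt_one (by positivity)]
  linarith

lemma ballMassBound_mono (hw : ∀ k, 0 ≤ w k) {a b : ℝ} (ha : 0 < a) (hab : a ≤ b) :
    ballMassBound w a ≤ ballMassBound w b := by
  have hsub : range (⌈b⁻¹⌉₊ + 1) ⊆ range (⌈a⁻¹⌉₊ + 1) :=
    range_subset_range.2 (Nat.succ_le_succ (Nat.ceil_mono (inv_anti₀ ha hab)))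
  have := sum_nonneg fun j (_ : j ∈ range (⌈b⁻¹⌉₊ + 1)) => hw j
  exact one_div_le_one_div_of_le (by positivity)
    (by linarith [sum_le_sum_of_subset_of_nonneg hsub fun j _ _ => hw j])

lemma ballMassBound_le_of_le (hw : ∀ k, 0 ≤ w k) {a x : ℝ} (hx : 0 ≤ x) (hxw : x ≤ w ⌈a⁻¹⌉₊) :
    ballMassBound w a ≤ 1 / (x + 1) := by
  have := single_le_sum (fun j _ => hw j) (self_mem_range_succ ⌈a⁻¹⌉₊)
  exact one_div_le_one_div_of_le (by positivity) (by linarith)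

end BallMassBound

/-- Given a fullness datum `T = N × K`, there is a non-decreasing `Δ : (0,1) → (0,1)`
such that for every `η > 0` there is a finite set `H` of nonzero positive functions
with: every unital positive `T`-`H`-full map `φ : C(X) → B` into a unital C*-algebra
with a tracial state `τ` satisfies `μ_{τ∘φ}(O_a) ≥ Δ(a)` for all `a ∈ (η, 1)` and all
open balls `O_a` of radius `a`. -/
theorem stmt_10 {X : Type*} [MetricSpace X] [CompactSpace X] [MeasurableSpace X] [BorelSpace X]
    (N : C(X, ℂ) → ℕ) (K : C(X, ℂ) → ℝ) :
    ∃ Δ : ℝ → ℝ,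
      (∀ a b : ℝ, 0 < a → a ≤ b → b < 1 → Δ a ≤ Δ b) ∧
      (∀ a : ℝ, 0 < a → a < 1 → 0 < Δ a ∧ Δ a < 1) ∧
      ∀ η : ℝ, 0 < η →
        ∃ H : Finset C(X, ℂ), (∀ f ∈ H, CMNonneg f ∧ f ≠ 0) ∧
          ∀ (B : Type) [CStarAlgebra B],
            ∀ φ : C(X, ℂ) →ₗ[ℂ] B, φ 1 = 1 →
              (∀ f : C(X, ℂ), CMNonneg f → ∃ b : B, φ f = star b * b) →
              (∀ f ∈ H, ∃ z : Fin (N f) → B, (∀ j, ‖z j‖ ≤ K f) ∧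
                ∑ j, star (z j) * φ f * z j = 1) →
              ∀ τ : B →ₗ[ℂ] ℂ, IsTracialState τ →
                ∀ μ : Measure X, IsProbabilityMeasure μ →
                  (∀ f : C(X, ℂ), τ (φ f) = ∫ z, f z ∂μ) →
                  ∀ a : ℝ, η < a → a < 1 → ∀ z : X,
                    ENNReal.ofReal (Δ a) ≤ μ (Metric.ball z a) := by
  classical
  set ρ : ℕ → ℝ := fun k => ((k : ℝ) + 1)⁻¹ / 2
  have hρ (k : ℕ) : 0 < ρ k := by positivity
  choose S hS using fun k => exists_finset_forall_exists_dist_lt (X := X) (hρ k)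
  set bumps : ℕ → Finset C(X, ℂ) := fun k => (S k).image fun y => ballBump y (ρ k)
  set w : ℕ → ℝ := fun k => ∑ f ∈ bumps k, (N f : ℝ) * K f ^ 2
  have hw (k : ℕ) : 0 ≤ w k := sum_nonneg fun f _ => by positivity
  refine ⟨ballMassBound w, fun a b ha hab _ => ballMassBound_mono hw ha hab,
    fun a _ _ => ⟨ballMassBound_pos hw a, ballMassBound_lt_one hw a⟩,
    fun η hη => ⟨(range (⌈η⁻¹⌉₊ + 1)).biUnion bumps, ?_, ?_⟩⟩
  · intro f hf
    obtain ⟨k, -, hk⟩ := mem_biUnion.1 hf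
    obtain ⟨y, -, rfl⟩ := mem_image.1 hk
    exact ⟨ballBump_nonneg y, ballBump_ne_zero y⟩
  intro B _ φ _ hφ hfull τ hτ μ _ hμ a hηa _ z
  set k := ⌈a⁻¹⌉₊
  obtain ⟨y, hy, hzy⟩ := hS k z
  have hf : ballBump y (ρ k) ∈ bumps k := mem_image_of_mem _ hy
  have hkη : k ∈ range (⌈η⁻¹⌉₊ + 1) :=
    mem_range_succ_iff.2 (Nat.ceil_mono (inv_anti₀ hη hηa.le))
  obtain ⟨b, hb⟩ := hφ _ (ballBump_nonneg y)
  obtain ⟨v, hvK, hvsum⟩ := hfull _ (mem_biUnion.2 ⟨k, hkη, hf⟩)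
  have hlower := hτ.one_div_le_re_of_sum_eq_one b v hvK (by rwa [hb] at hvsum)
  rw [← hb, hμ] at hlower
  have hρa : 2 * ρ k ≤ a := by
    have := inv_natCeil_inv_add_one_lt (hη.trans hηa)
    simp only [ρ]
    linarith
  have hupper := re_integral_ballBump_le_measureReal_ball μ (hρ k) hzy hρa
  have hΔ := ballMassBound_le_of_le hw (by positivity) (single_le_sum (fun f _ => by positivity) hf)
  exact ENNReal.ofReal_le_of_le_toReal (hΔ.trans (hlower.trans hupper))
end

section
/- Let X be a compact metric space, ε > 0, and F ⊆ C(X) a finite set. Choose η > 0 such that |f(x) − f(x')| < ε/2 for all f ∈ F whenever dist(x,x') < η. Let φ, ψ : C(X) → Mₙ(ℂ) be unital *-homomorphisms with spectra (lists of eigenvalue-points with multiplicity) Λ_φ = (x₁',…,xₙ') and Λ_ψ = (y₁',…,yₙ') (each point repeated according to the rank of its spectral projection). If there exists a permutation Δ of {1,…,n} with dist(x_i', y'_{Δ(i)}) < η for all i, then there is a unitary w ∈ Mₙ(ℂ) with ‖φ(f) − w*ψ(f)w‖ < ε for all f ∈ F. -/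
/-!
A family of `n` pairwise orthogonal rank-one projections in `Mₙ(ℂ)` has the form `eᵢ = uᵢ uᵢ*`
for an orthonormal basis `(uᵢ)`, so a single unitary `U` (with columns `uᵢ`) gives
`∑ cᵢ eᵢ = U diag(c) U*` for all `c`. Doing this for `(eᵢ)` and for `(e'_{Δ i})` with unitaries
`U` and `V`, the unitary `w = V U*` gives
`φ f - w* (ψ f) w = U diag(f(x'ᵢ) - f(y'_{Δ i})) U*`, whose norm is
`maxᵢ |f(x'ᵢ) - f(y'_{Δ i})| < ε / 2`.
-/

open scoped Matrix.Norms.L2Operator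

namespace Matrix

variable {𝕜 m : Type*} [RCLike 𝕜] [Fintype m]

lemma exists_star_smul_dotProduct_smul_eq_one {v : m → 𝕜} (hv : v ≠ 0) :
    ∃ c : 𝕜, star (c • v) ⬝ᵥ (c • v) = 1 := by
  have hx : (‖WithLp.toLp 2 v‖ : 𝕜) ≠ 0 := by simpa using hv
  have hv2 : star v ⬝ᵥ v = (‖WithLp.toLp 2 v‖ : 𝕜) ^ 2 := by
    rw [← inner_self_eq_norm_sq_to_K, EuclideanSpace.inner_eq_star_dotProduct, dotProduct_comm]
  refine ⟨(‖WithLp.toLp 2 v‖ : 𝕜)⁻¹, ?_⟩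
  rw [star_smul, smul_dotProduct, dotProduct_smul, hv2]
  simp only [smul_eq_mul, RCLike.star_def, map_inv₀, RCLike.conj_ofReal]
  field_simp

lemma exists_eq_vecMulVec_star_of_isStarProjection_of_rank_eq_one {e : Matrix m m 𝕜}
    (he : IsStarProjection e) (hrank : e.rank = 1) :
    ∃ u, star u ⬝ᵥ u = 1 ∧ e = vecMulVec u (star u) := by
  set R := LinearMap.range e.mulVecLin
  have hR : Module.finrank 𝕜 R = 1 := hrank
  obtain ⟨v, hvR, hv⟩ : ∃ v ∈ R, v ≠ 0 :=
    Submodule.exists_mem_ne_zero_of_ne_bot fun h => by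
      rw [h, finrank_bot] at hR
      exact zero_ne_one hR
  obtain ⟨c, hu⟩ := exists_star_smul_dotProduct_smul_eq_one hv
  set u := c • v
  have huR : u ∈ R := R.smul_mem c hvR
  have hRu : R = 𝕜 ∙ u := by
    refine (Submodule.eq_of_le_of_finrank_le ((Submodule.span_singleton_le_iff_mem _ _).2 huR)
      ?_).symm
    rw [finrank_span_singleton fun h => by simp [h] at hu, hR]
  have heu : e *ᵥ u = u := by
    obtain ⟨x, hx⟩ := huR
    rw [← hx, mulVecLin_apply, mulVec_mulVec, he.isIdempotentElem.eq]
  have hue : star u ᵥ* e = star u := by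
    conv_lhs => rw [← he.isSelfAdjoint.star_eq]
    rw [star_eq_conjTranspose, ← star_mulVec, heu]
  -- `e x` lies on the line `𝕜 ∙ u`, and self-adjointness makes its coordinate `⟪u, x⟫`.
  refine ⟨u, hu, ext_iff_mulVec.2 fun x => ?_⟩
  have hx : e *ᵥ x ∈ 𝕜 ∙ u := hRu ▸ LinearMap.mem_range_self e.mulVecLin x
  obtain ⟨a, ha⟩ := Submodule.mem_span_singleton.1 hx
  have ha' : a = star u ⬝ᵥ x := by
    rw [← hue, ← dotProduct_mulVec, ← ha, dotProduct_smul, hu, smul_eq_mul, mul_one]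
  rw [vecMulVec_mulVec, ← ha, ha', op_smul_eq_smul]

lemma star_dotProduct_eq_zero_of_vecMulVec_mul_eq_zero {u v : m → 𝕜} (hu : star u ⬝ᵥ u = 1)
    (hv : star v ⬝ᵥ v = 1)
    (h : vecMulVec u (star u) * vecMulVec v (star v) = 0) : star u ⬝ᵥ v = 0 := by
  have := congrArg (fun A => star u ⬝ᵥ A *ᵥ v) h
  simpa [← mulVec_mulVec, vecMulVec_mulVec, hu, hv] using this

variable [DecidableEq m]

lemma transpose_of_mem_unitaryGroup {u : m → m → 𝕜}
    (hu : ∀ i j, star (u i) ⬝ᵥ u j = (1 : Matrix m m 𝕜) i j) :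
    (of u)ᵀ ∈ unitaryGroup m 𝕜 := by
  rw [mem_unitaryGroup_iff']
  ext i j
  rw [← hu]
  simp [mul_apply, dotProduct]

lemma sum_smul_vecMulVec_star (u : m → m → 𝕜) (c : m → 𝕜) :
    ∑ i, c i • vecMulVec (u i) (star (u i)) = (of u)ᵀ * diagonal c * star (of u)ᵀ := by
  ext a b
  rw [mul_apply, Matrix.sum_apply]
  simp only [smul_apply, vecMulVec_apply, smul_eq_mul, mul_diagonal, transpose_apply, of_apply,
    star_apply, Pi.star_apply]
  exact Finset.sum_congr rfl fun _ _ => by ring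

lemma exists_mem_unitaryGroup_sum_smul_eq_mul_diagonal_mul_star {e : m → Matrix m m 𝕜}
    (hproj : ∀ i, IsStarProjection (e i)) (hrank : ∀ i, (e i).rank = 1)
    (horth : ∀ i j, i ≠ j → e i * e j = 0) :
    ∃ U ∈ unitaryGroup m 𝕜, ∀ c, ∑ i, c i • e i = U * diagonal c * star U := by
  choose u hu he using fun i =>
    exists_eq_vecMulVec_star_of_isStarProjection_of_rank_eq_one (hproj i) (hrank i)
  refine ⟨(of u)ᵀ, transpose_of_mem_unitaryGroup fun i j => ?_, fun c => ?_⟩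
  · rcases eq_or_ne i j with rfl | hij
    · simpa using hu i
    · rw [one_apply_ne hij]
      exact star_dotProduct_eq_zero_of_vecMulVec_mul_eq_zero (hu i) (hu j)
        (he i ▸ he j ▸ horth i j hij)
  · simpa only [← he] using sum_smul_vecMulVec_star u c

end Matrix

open Matrix in
theorem stmt_14_general {X : Type*} [MetricSpace X]
    (ε η : ℝ) (hε : 0 < ε)
    (F : Finset C(X, ℂ))
    (hmod : ∀ f ∈ F, ∀ x x' : X, dist x x' < η → ‖f x - f x'‖ < ε / 2)
    (n : ℕ)
    (φ ψ : C(X, ℂ) →⋆ₐ[ℂ] Matrix (Fin n) (Fin n) ℂ)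
    (x' y' : Fin n → X)
    (e e' : Fin n → Matrix (Fin n) (Fin n) ℂ)
    (heproj : ∀ i, e i * e i = e i ∧ star (e i) = e i)
    (he'proj : ∀ i, e' i * e' i = e' i ∧ star (e' i) = e' i)
    (herank : ∀ i, (e i).rank = 1) (he'rank : ∀ i, (e' i).rank = 1)
    (heorth : ∀ i j, i ≠ j → e i * e j = 0)
    (he'orth : ∀ i j, i ≠ j → e' i * e' j = 0)
    (hφ : ∀ f : C(X, ℂ), φ f = ∑ i, f (x' i) • e i)
    (hψ : ∀ f : C(X, ℂ), ψ f = ∑ i, f (y' i) • e' i)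
    (Δ : Equiv.Perm (Fin n)) (hΔ : ∀ i, dist (x' i) (y' (Δ i)) < η) :
    ∃ w ∈ Matrix.unitaryGroup (Fin n) ℂ,
      ∀ f ∈ F, ‖φ f - star w * ψ f * w‖ < ε := by
  obtain ⟨U, hU, hφU⟩ := exists_mem_unitaryGroup_sum_smul_eq_mul_diagonal_mul_star
    (fun i => ⟨(heproj i).1, (heproj i).2⟩) herank heorth
  obtain ⟨V, hV, hψV⟩ := exists_mem_unitaryGroup_sum_smul_eq_mul_diagonal_mul_star
    (e := e' ∘ Δ) (fun i => ⟨(he'proj (Δ i)).1, (he'proj (Δ i)).2⟩) (fun i => he'rank (Δ i))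
    (fun i j hij => he'orth _ _ (Δ.injective.ne hij))
  refine ⟨V * star U, mul_mem hV (Unitary.star_mem hU), fun f hf => ?_⟩
  have hφf : φ f = U * diagonal (fun i => f (x' i)) * star U := by rw [hφ, hφU]
  have hψf : ψ f = V * diagonal (fun i => f (y' (Δ i))) * star V := by
    rw [hψ, ← Equiv.sum_comp Δ, ← hψV]
    rfl
  have hdiff : φ f - star (V * star U) * ψ f * (V * star U) =
      U * diagonal (fun i => f (x' i) - f (y' (Δ i))) * star U := by
    have hVV := Unitary.star_mul_self_of_mem hV
    rw [hφf, hψf, star_mul, star_star, ← diagonal_sub, mul_sub, sub_mul]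
    congr 1
    simp only [← mul_assoc]
    rw [mul_assoc U (star V) V, hVV, mul_one, mul_assoc (U * _) (star V) V, hVV, mul_one]
  rw [hdiff, CStarRing.norm_mul_mem_unitary _ (Unitary.star_mem hU),
    CStarRing.norm_mem_unitary_mul _ hU, l2_opNorm_diagonal]
  exact (pi_norm_lt_iff hε).2 fun i => (hmod f hf _ _ (hΔ i)).trans (half_lt_self hε)

/-- If the spectra (with multiplicity) of two unital *-homomorphisms
`C(X) → Mₙ(ℂ)` can be matched within `η`, where `η` is a modulus of continuity for
`F` with tolerance `ε/2`, then the homomorphisms are unitarily equivalent up to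
`ε` on `F`. -/
theorem stmt_14 {X : Type*} [MetricSpace X] [CompactSpace X]
    (ε η : ℝ) (hε : 0 < ε) (hη : 0 < η)
    (F : Finset C(X, ℂ))
    (hmod : ∀ f ∈ F, ∀ x x' : X, dist x x' < η → ‖f x - f x'‖ < ε / 2)
    (n : ℕ)
    (φ ψ : C(X, ℂ) →⋆ₐ[ℂ] Matrix (Fin n) (Fin n) ℂ)
    (x' y' : Fin n → X)
    (e e' : Fin n → Matrix (Fin n) (Fin n) ℂ)
    (heproj : ∀ i, e i * e i = e i ∧ star (e i) = e i)
    (he'proj : ∀ i, e' i * e' i = e' i ∧ star (e' i) = e' i)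
    (herank : ∀ i, (e i).rank = 1) (he'rank : ∀ i, (e' i).rank = 1)
    (heorth : ∀ i j, i ≠ j → e i * e j = 0)
    (he'orth : ∀ i j, i ≠ j → e' i * e' j = 0)
    (hesum : ∑ i, e i = 1) (he'sum : ∑ i, e' i = 1)
    (hφ : ∀ f : C(X, ℂ), φ f = ∑ i, f (x' i) • e i)
    (hψ : ∀ f : C(X, ℂ), ψ f = ∑ i, f (y' i) • e' i)
    (Δ : Equiv.Perm (Fin n)) (hΔ : ∀ i, dist (x' i) (y' (Δ i)) < η) :
    ∃ w ∈ Matrix.unitaryGroup (Fin n) ℂ,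
      ∀ f ∈ F, ‖φ f - star w * ψ f * w‖ < ε :=
  stmt_14_general ε η hε F hmod n φ ψ x' y' e e' heproj he'proj herank he'rank heorth he'orth hφ hψ
    Δ hΔ
end

section
/- Let A be a unital C*-algebra with a tracial state τ, and let u, v be unitaries in A with ‖uvu*v* − 1‖ < 2 (so that log(uvu*v*) is defined by continuous functional calculus with the principal branch). If additionally w is a unitary commuting with log computations in the sense that ‖uwu*w* − 1‖ < 2 and ‖u(vw)u*(vw)* − 1‖ < 2, and the three products all avoid −1 in their spectra along the natural homotopies, then (1/2πi)·τ(log(u(vw)u*(vw)*)) = (1/2πi)·τ(log(uvu*v*)) + (1/2πi)·τ(log(uwu*w*)) provided the pairwise commutator norms are sufficiently small (below a universal constant). -/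
/-!
Writing `a = u v u* v*` and `b = u w u* w*`, one has `u (vw) u* (vw)* = a · (v b v*)`, and
`‖a - 1‖ = ‖uv - vu‖`, `‖v b v* - 1‖ = ‖uw - wu‖`. Near `1` the logarithm is the Mercator
series, and for a trace `τ` the function `s ↦ τ (log ((1 + s x)(1 + s y))) - τ (log (1 + s x))
- τ (log (1 + s y))` has derivative
`τ ((x (1 + s y) + (1 + s x) y) (1 + s y)⁻¹ (1 + s x)⁻¹) - τ (x (1 + s x)⁻¹) - τ (y (1 + s y)⁻¹)`,
which vanishes by cyclicity. Hence `τ (log (a c)) = τ (log a) + τ (log c)` for `a`, `c` close to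
`1`, and `τ (log (v b v*)) = τ (v (log b) v*) = τ (log b)`.
-/

noncomputable section

open Metric

def logCoeff (n : ℕ) : ℂ := (-1) ^ (n + 1) / n

@[simp] lemma logCoeff_zero : logCoeff 0 = 0 := by simp [logCoeff]

lemma norm_logCoeff_le_one (n : ℕ) : ‖logCoeff n‖ ≤ 1 := by
  rcases n with _ | n
  · simp
  · simp only [logCoeff, norm_div, norm_pow, norm_neg, norm_one, one_pow, Complex.norm_natCast]
    exact div_le_one_of_le₀ (by simp) (by positivity)

lemma logCoeff_succ_mul (n : ℕ) : logCoeff (n + 1) * (n + 1 : ℕ) = (-1) ^ n := by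
  rw [logCoeff, div_mul_cancel₀ _ (Nat.cast_ne_zero.2 n.succ_ne_zero), pow_succ, pow_succ]
  ring

lemma norm_logCoeff_mul_le_one (n : ℕ) : ‖logCoeff n * n‖ ≤ 1 := by
  rcases n with _ | n
  · simp
  · rw [logCoeff_succ_mul]
    simp

section LogOneAdd

variable {A : Type*} [NormedRing A] [NormedAlgebra ℂ A]

/-- The Mercator series of `log (1 + x)`; its `n = 0` term vanishes because `logCoeff 0 = 0`
(division by zero). -/
def logOneAdd (x : A) : A := ∑' n, logCoeff n • x ^ n

lemma norm_logCoeff_smul_pow_le (x : A) (n : ℕ) : ‖logCoeff n • x ^ n‖ ≤ ‖x‖ ^ n := by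
  rcases n with _ | n
  · simp
  · calc ‖logCoeff (n + 1) • x ^ (n + 1)‖ ≤ 1 * ‖x ^ (n + 1)‖ :=
          (norm_smul_le _ _).trans (by gcongr; exact norm_logCoeff_le_one _)
      _ ≤ ‖x‖ ^ (n + 1) := by rw [one_mul]; exact norm_pow_le' x n.succ_pos

lemma summable_logCoeff_smul_pow [CompleteSpace A] {x : A} (hx : ‖x‖ < 1) :
    Summable fun n ↦ logCoeff n • x ^ n :=
  .of_norm_bounded (summable_geometric_of_lt_one (norm_nonneg x) hx)
    (norm_logCoeff_smul_pow_le x)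

@[simp] lemma logOneAdd_zero : logOneAdd (0 : A) = 0 := by
  simp [logOneAdd, zero_pow_eq]

end LogOneAdd

lemma norm_one_add_mul_one_add_sub_one_le {A : Type*} [NormedRing A] (x y : A) :
    ‖(1 + x) * (1 + y) - 1‖ ≤ ‖x‖ + ‖y‖ + ‖x‖ * ‖y‖ := by
  have : (1 + x) * (1 + y) - 1 = x + y + x * y := by noncomm_ring
  rw [this]
  exact norm_add₃_le.trans (by gcongr; exact norm_mul_le _ _)

lemma norm_smul_le_one_third {E : Type*} [SeminormedAddCommGroup E] [NormedSpace ℝ E] {z : E}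
    (hz : ‖z‖ ≤ 1 / 4) {s : ℝ} (hs : s ∈ ball (0 : ℝ) (4 / 3)) : ‖s • z‖ ≤ 1 / 3 := by
  rw [mem_ball_zero_iff] at hs
  rw [norm_smul]
  nlinarith [norm_nonneg s, norm_nonneg z]

section Trace

variable {A : Type*} [NormedRing A] [NormedAlgebra ℂ A] (T : A →L[ℂ] ℂ)

lemma hasSum_logCoeff_mul_trace_mul_pow [CompleteSpace A] (q : A) {p : A} (hp : ‖p‖ < 1) :
    HasSum (fun n : ℕ ↦ logCoeff n * (n * T (q * p ^ (n - 1))))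
      (T (q * Ring.inverse (1 + p))) := by
  have hsucc : ∀ k : ℕ, logCoeff (k + 1) * ((k + 1) * T (q * p ^ k)) = T (q * (-p) ^ k) := by
    intro k
    rw [← neg_one_smul ℂ p, smul_pow, mul_smul_comm, map_smul, smul_eq_mul, ← mul_assoc,
      ← Nat.cast_succ, logCoeff_succ_mul]
  refine (hasSum_nat_add_iff' 1).mp ?_
  simpa [hsucc] using
    ((hasSum_geom_series_inverse (-p) (by rwa [norm_neg])).mul_left q).mapL T

variable (htr : ∀ a b : A, T (a * b) = T (b * a))
include htr

lemma trace_sum_pow_mul_mul_pow (x q : A) (n : ℕ) :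
    T (∑ i ∈ Finset.range n, x ^ (n - 1 - i) * q * x ^ i) = n * T (q * x ^ (n - 1)) := by
  have hterm : ∀ i ∈ Finset.range n, T (x ^ (n - 1 - i) * q * x ^ i) = T (q * x ^ (n - 1)) := by
    intro i hi
    rw [htr, ← mul_assoc, ← pow_add, Nat.add_sub_cancel' (by grind), htr]
  rw [map_sum, Finset.sum_congr rfl hterm, Finset.sum_const, Finset.card_range, nsmul_eq_mul]

lemma trace_logDeriv_mul (a b : Aˣ) (x y : A) :
    T ((x * b + a * y) * ↑(a * b)⁻¹) = T (x * ↑a⁻¹) + T (y * ↑b⁻¹) := by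
  have : (x * b + a * y) * ↑(a * b)⁻¹ = x * ↑a⁻¹ + a * (y * ↑b⁻¹ * ↑a⁻¹) := by
    simp only [mul_inv_rev, Units.val_mul, add_mul, mul_assoc, Units.mul_inv_cancel_left]
  rw [this, map_add, htr (a : A), mul_assoc, Units.inv_mul, mul_one]

variable [NormOneClass A] [CompleteSpace A]

/-- Under the trace the derivative of `p ^ n` becomes `n • q * p ^ (n - 1)`, so the differentiated
Mercator series is the geometric series of `(1 + p)⁻¹`. -/
lemma hasDerivAt_trace_logOneAdd {p q : ℝ → A} {U : Set ℝ} (hU : IsOpen U)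
    (hU' : IsPreconnected U) {r C : ℝ} (hr : r < 1)
    (hp : ∀ s ∈ U, HasDerivAt p (q s) s) (hpr : ∀ s ∈ U, ‖p s‖ ≤ r)
    (hqC : ∀ s ∈ U, ‖q s‖ ≤ C) {t : ℝ} (ht : t ∈ U) :
    HasDerivAt (fun s ↦ T (logOneAdd (p s))) (T (q t * Ring.inverse (1 + p t))) t := by
  have hr0 : 0 ≤ r := (norm_nonneg _).trans (hpr t ht)
  set g' : ℕ → ℝ → ℂ := fun n s ↦ logCoeff n * (n * T (q s * p s ^ (n - 1)))
  have hderiv : ∀ n, ∀ s ∈ U, HasDerivAt (fun s ↦ T (logCoeff n • p s ^ n)) (g' n s) s := by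
    intro n s hs
    refine ((T.restrictScalars ℝ).hasFDerivAt.comp_hasDerivAt s
      (((hp s hs).fun_pow' n).const_smul (logCoeff n))).congr_deriv ?_
    rw [ContinuousLinearMap.coe_restrictScalars', map_smul, Nat.pred_eq_sub_one,
      trace_sum_pow_mul_mul_pow T htr, smul_eq_mul]
  have hbound : ∀ n, ∀ s ∈ U, ‖g' n s‖ ≤ ‖T‖ * C * r ^ (n - 1) := by
    intro n s hs
    have hq : ‖q s * p s ^ (n - 1)‖ ≤ C * r ^ (n - 1) :=
      (norm_mul_le _ _).trans (mul_le_mul (hqC s hs)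
        ((norm_pow_le _ _).trans (by gcongr; exact hpr s hs))
        (norm_nonneg _) ((norm_nonneg _).trans (hqC s hs)))
    calc ‖g' n s‖ = ‖logCoeff n * n‖ * ‖T (q s * p s ^ (n - 1))‖ := by
          simp only [g', ← norm_mul, mul_assoc]
      _ ≤ 1 * (‖T‖ * (C * r ^ (n - 1))) :=
          mul_le_mul (norm_logCoeff_mul_le_one n) ((T.le_opNorm _).trans (by gcongr))
            (norm_nonneg _) zero_le_one
      _ = ‖T‖ * C * r ^ (n - 1) := by ring
  have hsum : Summable fun n : ℕ ↦ ‖T‖ * C * r ^ (n - 1) := by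
    refine (summable_nat_add_iff 1).mp ?_
    simpa using (summable_geometric_of_lt_one hr0 hr).mul_left (‖T‖ * C)
  have hmain := hasDerivAt_tsum_of_isPreconnected hsum hU hU' hderiv hbound ht
    ((summable_logCoeff_smul_pow ((hpr t ht).trans_lt hr)).mapL T) ht
  rw [(hasSum_logCoeff_mul_trace_mul_pow T (q t) ((hpr t ht).trans_lt hr)).tsum_eq] at hmain
  refine hmain.congr_of_eventuallyEq ?_
  filter_upwards [hU.mem_nhds ht] with s hs
  exact T.map_tsum (summable_logCoeff_smul_pow ((hpr s hs).trans_lt hr))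

lemma hasDerivAt_trace_logOneAdd_smul {x : A} (hx : ‖x‖ ≤ 1 / 4) {s : ℝ}
    (hs : s ∈ ball (0 : ℝ) (4 / 3)) :
    HasDerivAt (fun s : ℝ ↦ T (logOneAdd (s • x))) (T (x * Ring.inverse (1 + s • x))) s :=
  hasDerivAt_trace_logOneAdd T htr isOpen_ball (convex_ball _ _).isPreconnected
    (q := fun _ ↦ x) (r := 1 / 3) (C := 1) (by norm_num)
    (fun s _ ↦ by simpa using (hasDerivAt_id s).smul_const x)
    (fun _ ↦ norm_smul_le_one_third hx) (fun _ _ ↦ hx.trans (by norm_num)) hs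

lemma hasDerivAt_trace_logOneAdd_mul_smul {x y : A} (hx : ‖x‖ ≤ 1 / 4) (hy : ‖y‖ ≤ 1 / 4)
    {s : ℝ} (hs : s ∈ ball (0 : ℝ) (4 / 3)) :
    HasDerivAt (fun s : ℝ ↦ T (logOneAdd ((1 + s • x) * (1 + s • y) - 1)))
      (T ((x * (1 + s • y) + (1 + s • x) * y) * Ring.inverse ((1 + s • x) * (1 + s • y)))) s := by
  have hline : ∀ (z : A) (s : ℝ), HasDerivAt (fun s : ℝ ↦ 1 + s • z) z s := fun z s ↦ by
    simpa using ((hasDerivAt_id s).smul_const z).const_add 1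
  have hone_add : ∀ z : A, ‖z‖ ≤ 1 / 4 → ∀ s ∈ ball (0 : ℝ) (4 / 3), ‖1 + s • z‖ ≤ 4 / 3 :=
    fun z hz s hs ↦
      (norm_add_le _ _).trans (by rw [norm_one]; linarith [norm_smul_le_one_third hz hs])
  simpa using hasDerivAt_trace_logOneAdd T htr isOpen_ball (convex_ball _ _).isPreconnected
    (r := 7 / 9) (C := 1) (by norm_num) (fun s _ ↦ ((hline x s).mul (hline y s)).sub_const 1)
    (fun s hs ↦ (norm_one_add_mul_one_add_sub_one_le _ _).trans (by
      have := norm_smul_le_one_third hx hs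
      have := norm_smul_le_one_third hy hs
      nlinarith [norm_nonneg (s • x), norm_nonneg (s • y)]))
    (fun s hs ↦ (norm_add_le _ _).trans (by
      have := hone_add x hx s hs
      have := hone_add y hy s hs
      nlinarith [norm_mul_le x (1 + s • y), norm_mul_le (1 + s • x) y, norm_nonneg x,
        norm_nonneg y])) hs

lemma trace_logOneAdd_mul {x y : A} (hx : ‖x‖ ≤ 1 / 4) (hy : ‖y‖ ≤ 1 / 4) :
    T (logOneAdd ((1 + x) * (1 + y) - 1)) = T (logOneAdd x) + T (logOneAdd y) := by
  have hunit : ∀ z : A, ‖z‖ ≤ 1 / 4 → ∀ s ∈ ball (0 : ℝ) (4 / 3), IsUnit (1 + s • z) := by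
    intro z hz s hs
    simpa [sub_eq_add_neg] using isUnit_one_sub_of_norm_lt_one (x := -(s • z))
      (by rw [norm_neg]; linarith [norm_smul_le_one_third hz hs])
  set h : ℝ → ℂ := fun s ↦
    T (logOneAdd ((1 + s • x) * (1 + s • y) - 1)) - T (logOneAdd (s • x)) - T (logOneAdd (s • y))
  have hderiv : ∀ s ∈ ball (0 : ℝ) (4 / 3), HasDerivAt h 0 s := by
    intro s hs
    obtain ⟨a, ha⟩ := hunit x hx s hs
    obtain ⟨b, hb⟩ := hunit y hy s hs
    refine (((hasDerivAt_trace_logOneAdd_mul_smul T htr hx hy hs).sub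
      (hasDerivAt_trace_logOneAdd_smul T htr hx hs)).sub
      (hasDerivAt_trace_logOneAdd_smul T htr hy hs)).congr_deriv ?_
    rw [← ha, ← hb, ← Units.val_mul, Ring.inverse_unit, Ring.inverse_unit, Ring.inverse_unit,
      trace_logDeriv_mul T htr]
    ring
  have hconst : h 1 = h 0 :=
    isOpen_ball.is_const_of_deriv_eq_zero (convex_ball _ _).isPreconnected
      (fun s hs ↦ (hderiv s hs).differentiableAt.differentiableWithinAt)
      (fun s hs ↦ (hderiv s hs).deriv) (by simp; norm_num) (by simp)
  simpa [h, sub_eq_zero, sub_sub] using hconst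

end Trace

lemma norm_sub_one_le_of_mem_spectrum {A : Type*} [NormedRing A] [NormedAlgebra ℂ A]
    [CompleteSpace A] [NormOneClass A] {z : A} {μ : ℂ} (hμ : μ ∈ spectrum ℂ z) :
    ‖μ - 1‖ ≤ ‖z - 1‖ := by
  have : (μ - 1) + 1 ∈ spectrum ℂ z := by simpa using hμ
  rw [spectrum.add_mem_iff, map_one, neg_add_eq_sub] at this
  exact spectrum.norm_le_norm_of_mem this

lemma mul_mul_star_mul_star_mul_right {R : Type*} [Monoid R] [StarMul R] {u v : R}
    (hu : star u * u = 1) (hv : star v * v = 1) (w : R) :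
    u * (v * w) * star u * star (v * w) =
      u * v * star u * star v * (v * (u * w * star u * star w) * star v) := by
  simp only [star_mul, mul_assoc, ← mul_assoc (star v) v, hv, one_mul, ← mul_assoc (star u) u,
    hu]

lemma norm_mul_mul_star_mul_star_sub_one {E : Type*} [NormedRing E] [StarRing E] [CStarRing E]
    {u v : E} (hu : u ∈ unitary E) (hv : v ∈ unitary E) :
    ‖u * v * star u * star v - 1‖ = ‖u * v - v * u‖ := by
  have : u * v * star u * star v - 1 = (u * v - v * u) * star (v * u) := by
    rw [sub_mul, ← Unitary.mul_star_self_of_mem (mul_mem hv hu), star_mul]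
    noncomm_ring
  rw [this, CStarRing.norm_mul_mem_unitary _ (Unitary.star_mem (mul_mem hv hu))]

section CStarAlgebra

variable {A : Type*} [CStarAlgebra A]

lemma cfc_unitary_conj (f : ℂ → ℂ) {v : A} (hv : v ∈ unitary A) (b : A) [IsStarNormal b] :
    cfc f (v * b * star v) = v * cfc f b * star v := by
  have hspec : spectrum ℂ (v * b * star v) = spectrum ℂ b :=
    Unitary.spectrum_star_right_conjugate (U := ⟨v, hv⟩)
  by_cases hf : ContinuousOn f (spectrum ℂ b)
  · have : IsStarNormal (v * b * star v) :=
      IsStarNormal.map (Unitary.conjStarAlgAut ℂ A ⟨v, hv⟩) b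
    exact (StarAlgHomClass.map_cfc (Unitary.conjStarAlgAut ℂ A ⟨v, hv⟩) f b hf
      ((continuous_const.mul continuous_id).mul continuous_const)).symm
  · rw [cfc_apply_of_not_continuousOn _ hf, cfc_apply_of_not_continuousOn _ (hspec ▸ hf)]
    simp

lemma norm_unitary_conj_sub_one {v : A} (hv : v ∈ unitary A) (b : A) :
    ‖v * b * star v - 1‖ = ‖b - 1‖ := by
  have : v * b * star v - 1 = v * (b - 1) * star v := by
    rw [mul_sub_one, sub_mul, Unitary.mul_star_self_of_mem hv]
  rw [this, CStarRing.norm_mul_mem_unitary _ (Unitary.star_mem hv),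
    CStarRing.norm_mem_unitary_mul _ hv]

variable [Nontrivial A]

/-- The Mercator series converges uniformly on the spectrum, and `cfc` is continuous for
uniform convergence on the spectrum. -/
lemma cfc_log_eq_logOneAdd (z : A) [IsStarNormal z] (hz : ‖z - 1‖ < 1) :
    cfc Complex.log z = logOneAdd (z - 1) := by
  set F : ℕ → ℂ → ℂ := fun n w ↦ logCoeff n * (w - 1) ^ n
  have hbound : ∀ n, ∀ w ∈ spectrum ℂ z, ‖F n w‖ ≤ ‖z - 1‖ ^ n := fun n w hw ↦
    (norm_logCoeff_smul_pow_le (w - 1) n).trans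
      (pow_le_pow_left₀ (norm_nonneg _) (norm_sub_one_le_of_mem_spectrum hw) n)
  have hlog : Set.EqOn (fun w ↦ ∑' n, F n w) Complex.log (spectrum ℂ z) := by
    intro w hw
    have hsum := (Complex.hasSum_taylorSeries_log
      ((norm_sub_one_le_of_mem_spectrum hw).trans_lt hz)).tsum_eq
    rw [add_sub_cancel] at hsum
    rw [← hsum]
    exact tsum_congr fun n ↦ by simp only [F, logCoeff]; ring
  have hpartial : ∀ N, cfc (fun w ↦ ∑ n ∈ Finset.range N, F n w) z =
      ∑ n ∈ Finset.range N, logCoeff n • (z - 1) ^ n := by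
    intro N
    rw [← Finset.sum_fn, cfc_sum F z _ (fun n _ ↦ by fun_prop)]
    refine Finset.sum_congr rfl fun n _ ↦ ?_
    rw [cfc_const_mul _ _ _ (by fun_prop), cfc_pow _ _ _ (by fun_prop),
      cfc_sub (fun w : ℂ ↦ w) (fun _ ↦ 1) z (by fun_prop) (by fun_prop), cfc_id' ℂ z,
      cfc_const_one ℂ z]
  have hlim := tendsto_cfc_fun (a := z)
    (tendstoUniformlyOn_tsum_nat (summable_geometric_of_lt_one (norm_nonneg _) hz) hbound)
    (.of_forall fun N ↦ by fun_prop)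
  rw [cfc_congr hlog] at hlim
  simp only [hpartial] at hlim
  exact tendsto_nhds_unique hlim (summable_logCoeff_smul_pow hz).hasSum.tendsto_sum_nat

lemma trace_cfc_log_mul (T : A →L[ℂ] ℂ) (htr : ∀ a b : A, T (a * b) = T (b * a))
    {a c : A} [IsStarNormal a] [IsStarNormal c] [IsStarNormal (a * c)] (ha : ‖a - 1‖ ≤ 1 / 4)
    (hc : ‖c - 1‖ ≤ 1 / 4) :
    T (cfc Complex.log (a * c)) = T (cfc Complex.log a) + T (cfc Complex.log c) := by
  have hprod : (1 + (a - 1)) * (1 + (c - 1)) - 1 = a * c - 1 := by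
    rw [add_sub_cancel, add_sub_cancel]
  have hac : ‖a * c - 1‖ < 1 := by
    rw [← hprod]
    refine (norm_one_add_mul_one_add_sub_one_le _ _).trans_lt ?_
    nlinarith [norm_nonneg (a - 1), norm_nonneg (c - 1)]
  rw [cfc_log_eq_logOneAdd (a * c) hac, cfc_log_eq_logOneAdd a (by linarith),
    cfc_log_eq_logOneAdd c (by linarith), ← hprod, trace_logOneAdd_mul T htr ha hc]

lemma trace_cfc_log_mul_mul_star_mul_star_mul_right (T : A →L[ℂ] ℂ)
    (htr : ∀ a b : A, T (a * b) = T (b * a)) {u v w : A} (hu : u ∈ unitary A)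
    (hv : v ∈ unitary A) (hw : w ∈ unitary A) (huv : ‖u * v - v * u‖ ≤ 1 / 4)
    (huw : ‖u * w - w * u‖ ≤ 1 / 4) :
    T (cfc Complex.log (u * (v * w) * star u * star (v * w))) =
      T (cfc Complex.log (u * v * star u * star v)) +
        T (cfc Complex.log (u * w * star u * star w)) := by
  set a := u * v * star u * star v
  set b := u * w * star u * star w
  have ha : a ∈ unitary A :=
    mul_mem (mul_mem (mul_mem hu hv) (Unitary.star_mem hu)) (Unitary.star_mem hv)
  have hb : b ∈ unitary A :=
    mul_mem (mul_mem (mul_mem hu hw) (Unitary.star_mem hu)) (Unitary.star_mem hw)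
  have hc : v * b * star v ∈ unitary A := mul_mem (mul_mem hv hb) (Unitary.star_mem hv)
  have := isStarNormal_of_mem_unitary ha
  have := isStarNormal_of_mem_unitary hb
  have := isStarNormal_of_mem_unitary hc
  have := isStarNormal_of_mem_unitary (mul_mem ha hc)
  have hconj : T (cfc Complex.log (v * b * star v)) = T (cfc Complex.log b) := by
    rw [cfc_unitary_conj _ hv, htr, ← mul_assoc, Unitary.star_mul_self_of_mem hv, one_mul]
  rw [mul_mul_star_mul_star_mul_right (Unitary.star_mul_self_of_mem hu)
      (Unitary.star_mul_self_of_mem hv), ← hconj]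
  exact trace_cfc_log_mul T htr ((norm_mul_mul_star_mul_star_sub_one hu hv).trans_le huv)
    ((norm_unitary_conj_sub_one hv b).trans_le
      ((norm_mul_mul_star_mul_star_sub_one hu hw).trans_le huw))

end CStarAlgebra

/-- Additivity of the rotation number `(2πi)⁻¹ τ(log(u v u* v*))` in the second
variable: there is a universal constant `δ > 0` such that whenever the multiplicative
commutators of `(u,v)`, `(u,w)` and `(u,vw)` are at distance `< 2` from `1` and avoid
`−1` in their spectra, and the pairwise commutator norms are `< δ`, the rotation
number of `(u, vw)` is the sum of those of `(u,v)` and `(u,w)`. -/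
theorem stmt_18 :
    ∃ δ : ℝ, 0 < δ ∧
      ∀ (A : Type) [CStarAlgebra A],
        ∀ τ : A →ₗ[ℂ] ℂ, IsTracialState τ →
          ∀ u v w : A, u ∈ unitary A → v ∈ unitary A → w ∈ unitary A →
            ‖u * v * star u * star v - 1‖ < 2 →
            ‖u * w * star u * star w - 1‖ < 2 →
            ‖u * (v * w) * star u * star (v * w) - 1‖ < 2 →
            (-1 : ℂ) ∉ spectrum ℂ (u * v * star u * star v) →
            (-1 : ℂ) ∉ spectrum ℂ (u * w * star u * star w) →
            (-1 : ℂ) ∉ spectrum ℂ (u * (v * w) * star u * star (v * w)) →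
            ‖u * v - v * u‖ < δ → ‖u * w - w * u‖ < δ → ‖v * w - w * v‖ < δ →
            (2 * (Real.pi : ℂ) * Complex.I)⁻¹ *
                τ (cfc (p := IsStarNormal) Complex.log
                  (u * (v * w) * star u * star (v * w))) =
              (2 * (Real.pi : ℂ) * Complex.I)⁻¹ *
                  τ (cfc (p := IsStarNormal) Complex.log (u * v * star u * star v)) +
                (2 * (Real.pi : ℂ) * Complex.I)⁻¹ *
                  τ (cfc (p := IsStarNormal) Complex.log (u * w * star u * star w)) := by
  refine ⟨1 / 4, by norm_num, ?_⟩
  intro A _ τ hτ u v w hu hv hw _ _ _ _ _ _ huv huw _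
  rcases subsingleton_or_nontrivial A with _ | _
  · simp [Subsingleton.elim _ (0 : A)]
  obtain ⟨hτc, -, -, htr⟩ := hτ
  rw [← mul_add]
  exact congrArg _ (trace_cfc_log_mul_mul_star_mul_star_mul_right ⟨τ, hτc⟩ htr hu hv hw
    huv.le huw.le)

end
end
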